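/- arXiv:1605.06460 — 2 statements merged into one kernel-verified Lean document; each statement's English description precedes it below -/
import Mathlib

section
/- Let (E,ℒ,ℬ) be a labelled space, let α be a nonempty finite labelled path and β ∈ ℒ*(E) be such that αβ is a labelled path, and let F ∈ X_{αβ}. Then the upward closure {D ∈ ℬ_β : C ⊆ D for some C ∈ F} of F in ℬ_β belongs to X_{(α)β}; that is, it is an ultrafilter in ℬ_β containing r(αβ). -/
open Set

/-- A filter in the sub-poset `P` of a powerset, ordered by inclusion, with least
element `∅`: nonempty, upward-closed within `P`, downward-directed, not containing `∅`. -/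
def IsFilterIn {V : Type*} (P F : Set (Set V)) : Prop :=
  F ⊆ P ∧ F.Nonempty ∧ ∅ ∉ F ∧
    (∀ X ∈ F, ∀ Y ∈ P, X ⊆ Y → Y ∈ F) ∧
    (∀ X ∈ F, ∀ Y ∈ F, ∃ Z ∈ F, Z ⊆ X ∧ Z ⊆ Y)

/-- An ultrafilter in `P` is a maximal filter in `P`. -/
def IsUltrafilterIn {V : Type*} (P F : Set (Set V)) : Prop :=
  IsFilterIn P F ∧ ∀ G : Set (Set V), IsFilterIn P G → F ⊆ G → G = F

/-- A labelled graph: a directed graph with source, range and a surjective labelling map. -/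
structure LGraph (V Edg A : Type*) where
  src : Edg → V
  rng : Edg → V
  lbl : Edg → A
  lbl_surj : Function.Surjective lbl

namespace LGraph

variable {V Edg A : Type*} (G : LGraph V Edg A)

/-- A finite path: a list of composable edges. -/
def IsPath (p : List Edg) : Prop := p.Chain' fun e f => G.rng e = G.src f

/-- The relative range `r(S, α)`, with the convention `r(S, ω) = S`. -/
def relR (S : Set V) : List A → Set V
  | [] => S
  | a :: w =>
      {v | ∃ p : List Edg, G.IsPath p ∧ p.map G.lbl = a :: w ∧
        ∃ h : p ≠ [], G.src (p.head h) ∈ S ∧ G.rng (p.getLast h) = v}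

/-- `α ∈ ℒ*(E)` : a finite labelled path (including the empty word). -/
def IsLbl (α : List A) : Prop := ∃ p : List Edg, G.IsPath p ∧ p.map G.lbl = α

/-- An infinite labelled path. -/
def IsLblInf (α : ℕ → A) : Prop :=
  ∃ p : ℕ → Edg, (∀ n, G.rng (p n) = G.src (p (n + 1))) ∧ ∀ n, G.lbl (p n) = α n

end LGraph

/-- A labelled space: a labelled graph together with an accommodating family `ℬ`. -/
structure LabelledSpace (V Edg A : Type*) extends LGraph V Edg A where
  ℬ : Set (Set V)
  inter_mem : ∀ ⦃X Y : Set V⦄, X ∈ ℬ → Y ∈ ℬ → X ∩ Y ∈ ℬ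
  union_mem : ∀ ⦃X Y : Set V⦄, X ∈ ℬ → Y ∈ ℬ → X ∪ Y ∈ ℬ
  range_mem : ∀ α : List A, α ≠ [] → toLGraph.IsLbl α → toLGraph.relR Set.univ α ∈ ℬ
  relR_mem : ∀ ⦃X : Set V⦄, X ∈ ℬ → ∀ α : List A, toLGraph.IsLbl α → toLGraph.relR X α ∈ ℬ

/-- Words of length `≤ ∞`: finite words are lists, infinite words are sequences. -/
abbrev LWord (A : Type*) := List A ⊕ (ℕ → A)

/-- The length of a word in `ℕ∞`. -/
def wlen {A : Type*} : LWord A → ℕ∞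
  | .inl l => (l.length : ℕ∞)
  | .inr _ => (⊤ : ℕ∞)

/-- `α_{1,n}` : the initial subword of length `n`. -/
def wtake {A : Type*} : LWord A → ℕ → List A
  | .inl l, n => l.take n
  | .inr f, n => (List.range n).map f

/-- Concatenation of a finite word with a word. -/
def wappend {A : Type*} (α : List A) : LWord A → LWord A
  | .inl l => .inl (α ++ l)
  | .inr f => .inr fun n => if h : n < α.length then α.get ⟨n, h⟩ else f (n - α.length)

namespace LabelledSpace

variable {V Edg A : Type*} (L : LabelledSpace V Edg A)

abbrev relR : Set V → List A → Set V := L.toLGraph.relR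

abbrev IsLbl : List A → Prop := L.toLGraph.IsLbl

/-- `r(α)` : the range of a word. -/
def wr (α : List A) : Set V := L.relR Set.univ α

/-- Membership in `ℒ^{≤∞}(E)`. -/
def IsLWord : LWord A → Prop
  | .inl l => L.IsLbl l
  | .inr f => L.toLGraph.IsLblInf f

/-- Weakly left-resolving. -/
def WeaklyLeftResolving : Prop :=
  ∀ ⦃X Y : Set V⦄, X ∈ L.ℬ → Y ∈ L.ℬ → ∀ α : List A, α ≠ [] →
    L.relR (X ∩ Y) α = L.relR X α ∩ L.relR Y α

/-- `ℬ` is closed under relative complements. -/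
def ClosedUnderRelComplements : Prop :=
  ∀ ⦃X Y : Set V⦄, X ∈ L.ℬ → Y ∈ L.ℬ → X \ Y ∈ L.ℬ

/-- `ℬ_α = {A ∈ ℬ : A ⊆ r(α)}`. -/
def Bw (α : List A) : Set (Set V) := {X | X ∈ L.ℬ ∧ X ⊆ L.wr α}

/-- `X_α` : the set of ultrafilters in `ℬ_α`. -/
def Xw (α : List A) : Set (Set (Set V)) := {F | IsUltrafilterIn (L.Bw α) F}

/-- `X_{(α)β} = {F ∈ X_β : r(αβ) ∈ F}`, with the convention `X_{(ω)β} = X_β`. -/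
def XP (α β : List A) : Set (Set (Set V)) :=
  match α with
  | [] => L.Xw β
  | a :: l => {F | F ∈ L.Xw β ∧ L.wr ((a :: l) ++ β) ∈ F}

/-- `g_{(α)β}(F) = {C ∩ r(αβ) : C ∈ F}`. -/
def gmap (α β : List A) (F : Set (Set V)) : Set (Set V) :=
  {D | ∃ C ∈ F, D = C ∩ L.wr (α ++ β)}

/-- `h_{[α]β}(F)` : the upward closure of `F` in `ℬ_β` (only depends on `β`). -/
def hmap (β : List A) (F : Set (Set V)) : Set (Set V) :=
  {D | D ∈ L.Bw β ∧ ∃ C ∈ F, C ⊆ D}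

/-- `f_{β[γ]}(F) = {A ∈ ℬ_β : r(A,γ) ∈ F}`. -/
def fmap (β γ : List A) (F : Set (Set V)) : Set (Set V) :=
  {X | X ∈ L.Bw β ∧ L.relR X γ ∈ F}

/-- `X_α^{sink}`. -/
def Xsink (α : List A) : Set (Set (Set V)) :=
  {F | F ∈ L.Xw α ∧ ∀ b : A, ∃ X ∈ F, L.relR X [b] = ∅}

/-- A complete family (of filters) for the word `w`. -/
def IsCompleteFamily (w : LWord A) (F : ℕ → Set (Set V)) : Prop :=
  (∀ n : ℕ, 0 < n → (n : ℕ∞) ≤ wlen w → IsFilterIn (L.Bw (wtake w n)) (F n)) ∧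
  (IsFilterIn (L.Bw []) (F 0) ∨ F 0 = ∅) ∧
  ∀ n : ℕ, (n : ℕ∞) < wlen w →
    F n = {X | X ∈ L.Bw (wtake w n) ∧ L.relR X ((wtake w (n + 1)).drop n) ∈ F (n + 1)}

/-- A complete family of ultrafilters for the word `w`. -/
def IsCompleteUltraFamily (w : LWord A) (F : ℕ → Set (Set V)) : Prop :=
  (∀ n : ℕ, 0 < n → (n : ℕ∞) ≤ wlen w → IsUltrafilterIn (L.Bw (wtake w n)) (F n)) ∧
  (IsUltrafilterIn (L.Bw []) (F 0) ∨ F 0 = ∅) ∧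
  ∀ n : ℕ, (n : ℕ∞) < wlen w →
    F n = {X | X ∈ L.Bw (wtake w n) ∧ L.relR X ((wtake w (n + 1)).drop n) ∈ F (n + 1)}

/-- Membership in `E(S)`: `none` is the zero element, `some (α, X)` stands for `(α, X, α)`. -/
def ESmem : Option (List A × Set V) → Prop
  | none => True
  | some p => p.2 ∈ L.Bw p.1 ∧ p.2 ≠ ∅

/-- `E(S) ∖ {0}`. -/
def ESnz : Set (Option (List A × Set V)) := {p | L.ESmem p ∧ p ≠ none}

/-- The natural order on `E(S)`: `(α,A,α) ≤ (β,B,β)` iff `α = βα'` and `A ⊆ r(B,α')`. -/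
def ESle : Option (List A × Set V) → Option (List A × Set V) → Prop
  | none, _ => True
  | some _, none => False
  | some p, some q => ∃ γ : List A, p.1 = q.1 ++ γ ∧ p.2 ⊆ L.relR q.2 γ

open Classical in
/-- The product in the semilattice `E(S)`. -/
noncomputable def ESmul :
    Option (List A × Set V) → Option (List A × Set V) → Option (List A × Set V)
  | none, _ => none
  | some _, none => none
  | some p, some q =>
    if p.1 <+: q.1 then
      if L.relR p.2 (q.1.drop p.1.length) ∩ q.2 = ∅ then none
      else some (q.1, L.relR p.2 (q.1.drop p.1.length) ∩ q.2)
    else if q.1 <+: p.1 then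
      if p.2 ∩ L.relR q.2 (p.1.drop q.1.length) = ∅ then none
      else some (p.1, p.2 ∩ L.relR q.2 (p.1.drop q.1.length))
    else none

/-- A filter in `E(S)`. -/
def IsESFilter (ξ : Set (Option (List A × Set V))) : Prop :=
  ξ ⊆ L.ESnz ∧ ξ.Nonempty ∧
    (∀ p ∈ ξ, ∀ q, L.ESmem q → L.ESle p q → q ∈ ξ) ∧
    (∀ p ∈ ξ, ∀ q ∈ ξ, ∃ z ∈ ξ, L.ESle z p ∧ L.ESle z q)

/-- `Z` is a cover for `x` in `E(S)`. -/
def ESCover (x : Option (List A × Set V)) (Z : Set (Option (List A × Set V))) : Prop :=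
  (∀ z ∈ Z, L.ESmem z ∧ L.ESle z x) ∧
  ∀ y, L.ESmem y → y ≠ none → L.ESle y x → ∃ z ∈ Z, L.ESmul y z ≠ none

/-- A tight filter in `E(S)`: every finite cover of an element of the filter meets the filter. -/
def IsTightESFilter (ξ : Set (Option (List A × Set V))) : Prop :=
  L.IsESFilter ξ ∧
    ∀ x ∈ ξ, ∀ Z : Set (Option (List A × Set V)), Z.Finite → L.ESCover x Z →
      (Z ∩ ξ).Nonempty

/-- The filter in `E(S)` associated with the pair `(w, F)` of a word together with a
(complete) family: `ξ = ⋃_n ⋃_{X ∈ F n} ↑(w_{1,n}, X)`. -/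
def filterOf (w : LWord A) (F : ℕ → Set (Set V)) : Set (Option (List A × Set V)) :=
  {p | L.ESmem p ∧
    ∃ n : ℕ, (n : ℕ∞) ≤ wlen w ∧ ∃ X ∈ F n, L.ESle (some (wtake w n, X)) p}

/-- `ξ_n = {X : (w_{1,n}, X, w_{1,n}) ∈ ξ}`. -/
def xiN (_L : LabelledSpace V Edg A) (w : LWord A) (ξ : Set (Option (List A × Set V)))
    (n : ℕ) : Set (Set V) :=
  {X | some (wtake w n, X) ∈ ξ}

/-- `T_w` : the tight filters in `E(S)` whose associated word is `w`. -/
def Tw (w : LWord A) : Set (Set (Option (List A × Set V))) :=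
  {ξ | L.IsTightESFilter ξ ∧
    ∃ F : ℕ → Set (Set V), L.IsCompleteFamily w F ∧ ξ = L.filterOf w F}

/-- `T_{(α)w} = {ξ ∈ T_w : ξ₀ is an ultrafilter in ℬ with r(α) ∈ ξ₀}`, with
`T_{(ω)w} = T_w`. -/
def TwP (α : List A) (w : LWord A) : Set (Set (Option (List A × Set V))) :=
  match α with
  | [] => L.Tw w
  | a :: l =>
    {ξ | ξ ∈ L.Tw w ∧ IsUltrafilterIn (L.Bw []) (L.xiN w ξ 0) ∧ L.wr (a :: l) ∈ L.xiN w ξ 0}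

/-- The family `{J_i}` for `αw` built from a family `{F_n}` for `w`:
`J_{|α|+n} = g_{(α)w_{1,n}}(F_n)` for `1 ≤ n ≤ |w|` and
`J_i = f_{α_{1,i}[α_{i+1,|α|}w₁]}(J_{|α|+1})` for `0 ≤ i ≤ |α|`
(reading `J_{|α|} = g_{(α)ω}(F₀)` and `J_i = f_{α_{1,i}[α_{i+1,|α|}]}(J_{|α|})` when `w = ω`). -/
def Jfamily (α : List A) (w : LWord A) (F : ℕ → Set (Set V)) : ℕ → Set (Set V) :=
  match w with
  | .inl [] => fun i =>
      if i < α.length then L.fmap (α.take i) (α.drop i) (L.gmap α [] (F 0))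
      else L.gmap α [] (F 0)
  | w => fun i =>
      if i ≤ α.length then
        L.fmap (α.take i) (α.drop i ++ wtake w 1) (L.gmap α (wtake w 1) (F 1))
      else L.gmap α (wtake w (i - α.length)) (F (i - α.length))

/-- `G_{(α)w}` as an operation on filters in `E(S)`. -/
def Gmap (α : List A) (w : LWord A) (ξ : Set (Option (List A × Set V))) :
    Set (Option (List A × Set V)) :=
  L.filterOf (wappend α w) (L.Jfamily α w (L.xiN w ξ))

/-- The family `{η_n}` for `w` built from a family for `αw`:
`η_n = h_{[α]w_{1,n}}(F_{|α|+n})`. -/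
def Hfam (α : List A) (w : LWord A) (F : ℕ → Set (Set V)) : ℕ → Set (Set V) :=
  fun n => L.hmap (wtake w n) (F (α.length + n))

/-- `H_{[α]w}` as an operation on filters in `E(S)`. -/
def Hmap (α : List A) (w : LWord A) (ξ : Set (Option (List A × Set V))) :
    Set (Option (List A × Set V)) :=
  L.filterOf w (L.Hfam α w (L.xiN (wappend α w) ξ))

end LabelledSpace

/-- The topology of pointwise convergence on sets of subsets of `V`
(product topology with discrete coordinates, via indicator functions). -/
def memTopology (V : Type*) : TopologicalSpace (Set (Set V)) :=
  show TopologicalSpace (Set V → Prop) from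
    @Pi.topologicalSpace (Set V) (fun _ => Prop) (fun _ => ⊥)

/-!
Since `r(αβ) ⊆ r(β)`, the poset `ℬ_{αβ}` is the principal down-set `{X ∈ ℬ_β : X ⊆ r(αβ)}`
of `ℬ_β`. If a filter `G ⊇ h(F)` in `ℬ_β` contains `D`, it contains `D ∩ r(αβ)`, and the
members of `G` below `r(αβ)` form a filter in `ℬ_{αβ}` containing `F`, hence equal to `F` by
maximality; so `D ∩ r(αβ) ∈ F` and `D ∈ h(F)`.
-/

section UpperClosure

variable {V : Type*}

def upperClosureIn (Q F : Set (Set V)) : Set (Set V) :=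
  {D | D ∈ Q ∧ ∃ C ∈ F, C ⊆ D}

theorem IsFilterIn.upperClosureIn {P Q F : Set (Set V)} (hF : IsFilterIn P F) (hPQ : P ⊆ Q) :
    IsFilterIn Q (upperClosureIn Q F) := by
  obtain ⟨hFP, ⟨C₀, hC₀⟩, hF₀, -, hFdir⟩ := hF
  refine ⟨fun D hD => hD.1, ⟨C₀, hPQ (hFP hC₀), C₀, hC₀, subset_rfl⟩, ?_, ?_, ?_⟩
  · rintro ⟨-, C, hC, hC₀⟩
    exact hF₀ (subset_empty_iff.mp hC₀ ▸ hC)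
  · rintro D ⟨-, C, hC, hCD⟩ Y hY hDY
    exact ⟨hY, C, hC, hCD.trans hDY⟩
  · rintro D₁ ⟨-, C₁, hC₁, hCD₁⟩ D₂ ⟨-, C₂, hC₂, hCD₂⟩
    obtain ⟨C, hC, hCC₁, hCC₂⟩ := hFdir C₁ hC₁ C₂ hC₂
    exact ⟨C, ⟨hPQ (hFP hC), C, hC, subset_rfl⟩, hCC₁.trans hCD₁, hCC₂.trans hCD₂⟩

theorem IsFilterIn.sep_subset {Q G : Set (Set V)} {R : Set V} (hG : IsFilterIn Q G)
    (hR : R ∈ G) : IsFilterIn {X ∈ Q | X ⊆ R} {X ∈ G | X ⊆ R} := by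
  obtain ⟨hGQ, -, hG₀, hGup, hGdir⟩ := hG
  refine ⟨fun X hX => ⟨hGQ hX.1, hX.2⟩, ⟨R, hR, subset_rfl⟩, fun h => hG₀ h.1, ?_, ?_⟩
  · rintro X ⟨hX, -⟩ Y ⟨hYQ, hYR⟩ hXY
    exact ⟨hGup X hX Y hYQ hXY, hYR⟩
  · rintro X₁ ⟨hX₁, hX₁R⟩ X₂ ⟨hX₂, -⟩
    obtain ⟨Z, hZ, hZX₁, hZX₂⟩ := hGdir X₁ hX₁ X₂ hX₂
    exact ⟨Z, ⟨hZ, hZX₁.trans hX₁R⟩, hZX₁, hZX₂⟩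

theorem IsFilterIn.inter_mem {Q G : Set (Set V)} (hG : IsFilterIn Q G)
    (hQ : ∀ X ∈ Q, ∀ Y ∈ Q, X ∩ Y ∈ Q) {X Y : Set V} (hX : X ∈ G) (hY : Y ∈ G) :
    X ∩ Y ∈ G := by
  obtain ⟨hGQ, -, -, hGup, hGdir⟩ := hG
  obtain ⟨Z, hZ, hZX, hZY⟩ := hGdir X hX Y hY
  exact hGup Z hZ _ (hQ X (hGQ hX) Y (hGQ hY)) (subset_inter hZX hZY)

theorem IsUltrafilterIn.upperClosureIn {Q F : Set (Set V)} {R : Set V}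
    (hQ : ∀ X ∈ Q, ∀ Y ∈ Q, X ∩ Y ∈ Q) (hR : R ∈ Q)
    (hF : IsUltrafilterIn {X ∈ Q | X ⊆ R} F) :
    IsUltrafilterIn Q (upperClosureIn Q F) := by
  obtain ⟨hFfilter, hFmax⟩ := hF
  obtain ⟨hFP, ⟨C₀, hC₀⟩, -⟩ := id hFfilter
  refine ⟨hFfilter.upperClosureIn fun X hX => hX.1, fun G hG hFG => ?_⟩
  refine subset_antisymm (fun D hD => ?_) hFG
  have hRG : R ∈ G := hFG ⟨hR, C₀, hC₀, (hFP hC₀).2⟩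
  have hG_sep : {X ∈ G | X ⊆ R} = F :=
    hFmax _ (hG.sep_subset hRG) fun C hC => ⟨hFG ⟨(hFP hC).1, C, hC, subset_rfl⟩, (hFP hC).2⟩
  have hDR : D ∩ R ∈ F := hG_sep ▸ ⟨hG.inter_mem hQ hD hRG, inter_subset_right⟩
  exact ⟨hG.1 hD, _, hDR, inter_subset_left⟩

end UpperClosure

namespace LGraph

variable {V Edg A : Type*} (G : LGraph V Edg A)

theorem mem_relR_iff {S : Set V} {γ : List A} (hγ : γ ≠ []) {v : V} :
    v ∈ G.relR S γ ↔ ∃ p : List Edg, G.IsPath p ∧ p.map G.lbl = γ ∧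
      ∃ h : p ≠ [], G.src (p.head h) ∈ S ∧ G.rng (p.getLast h) = v := by
  obtain ⟨c, w, rfl⟩ := List.exists_cons_of_ne_nil hγ
  rfl

theorem relR_append_subset (S : Set V) (α β : List A) :
    G.relR S (α ++ β) ⊆ G.relR univ β := by
  rcases eq_or_ne β [] with rfl | hβ
  · exact subset_univ _
  intro v hv
  obtain ⟨p, hp, hpβ, hp₀, -, rfl⟩ := (G.mem_relR_iff (by simp [hβ])).mp hv
  have hq : (p.drop α.length).map G.lbl = β := by rw [List.map_drop, hpβ, List.drop_left]
  have hq₀ : p.drop α.length ≠ [] := fun h => hβ (by rw [← hq, h, List.map_nil])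
  exact (G.mem_relR_iff hβ).mpr
    ⟨_, hp.drop _, hq, hq₀, trivial, by rw [List.getLast_drop]⟩

end LGraph

namespace LabelledSpace

variable {V Edg A : Type*} (L : LabelledSpace V Edg A)

theorem inter_mem_Bw (β : List A) : ∀ X ∈ L.Bw β, ∀ Y ∈ L.Bw β, X ∩ Y ∈ L.Bw β :=
  fun _ hX _ hY => ⟨L.inter_mem hX.1 hY.1, inter_subset_left.trans hX.2⟩

theorem hmap_eq_upperClosureIn (β : List A) (F : Set (Set V)) :
    L.hmap β F = upperClosureIn (L.Bw β) F :=
  rfl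

theorem Bw_append_eq (α β : List A) : L.Bw (α ++ β) = {X ∈ L.Bw β | X ⊆ L.wr (α ++ β)} := by
  ext X
  exact ⟨fun hX => ⟨⟨hX.1, hX.2.trans (L.relR_append_subset univ α β)⟩, hX.2⟩,
    fun hX => ⟨hX.1.1, hX.2⟩⟩

end LabelledSpace

section
variable {V Edg A : Type*} (L : LabelledSpace V Edg A)

theorem hmap_mem_XP (α β : List A) (hα : α ≠ [])
    (hαβ : L.IsLbl (α ++ β)) :
    ∀ F ∈ L.Xw (α ++ β), L.hmap β F ∈ L.XP α β := by
  intro F hF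
  have hR : L.wr (α ++ β) ∈ L.Bw β :=
    ⟨L.range_mem _ (by simp [hα]) hαβ, L.relR_append_subset univ α β⟩
  have hFR : IsUltrafilterIn {X ∈ L.Bw β | X ⊆ L.wr (α ++ β)} F := L.Bw_append_eq α β ▸ hF
  obtain ⟨C₀, hC₀⟩ := hFR.1.2.1
  obtain ⟨a, l, rfl⟩ := List.exists_cons_of_ne_nil hα
  rw [L.hmap_eq_upperClosureIn]
  exact ⟨hFR.upperClosureIn (L.inter_mem_Bw β) hR, hR, C₀, hC₀, (hFR.1.1 hC₀).2⟩

end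
end

section
/- Let (E,ℒ,ℬ) be a weakly left-resolving labelled space with ℬ closed under relative complements, let α be a nonempty finite labelled path and β ∈ ℒ^{≤∞}(E) be such that αβ ∈ ℒ^{≤∞}(E). If ξ ∈ T_{αβ} with complete family {ξ_n}_{0≤n≤|αβ|}, then the filter in E(S) with word β associated with the complete family {h_{[α]β_{1,n}}(ξ_{|α|+n})}_{0≤n≤|β|} is a tight filter. -/
open Set

/-!
A set `X ∈ ℬ_{β_{1,n}}` lies in `h_{[α]β_{1,n}}(ξ_{|α|+n})` iff `X ∩ r(αβ_{1,n}) ∈ ξ_{|α|+n}`, and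
weak left-resolvingness lets `r(·, β_{n+1})` commute with this intersection; this gives the
completeness of the family. For tightness, let `(β_{1,m}, X)` lie in the new filter, witnessed by
`C ∈ ξ_{|α|+m}` with `C ⊆ X`, and let `Z` be a finite cover of it. The products
`(αβ_{1,m}, C) · (αν, Y)` for `(ν, Y) ∈ Z` form a finite cover of `(αβ_{1,m}, C) ∈ ξ`, so by
tightness of `ξ` one of them lies in `ξ`; as it is contained in `Y`, the corresponding `(ν, Y)`
lies in the new filter.
-/

namespace LabelledSpace

variable {V Edg A : Type*} (L : LabelledSpace V Edg A)

theorem relR_mono {S T : Set V} (h : S ⊆ T) : ∀ γ : List A, L.relR S γ ⊆ L.relR T γ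
  | [] => h
  | _ :: _ => fun _ ⟨p, hp, hl, hne, hs, hr⟩ => ⟨p, hp, hl, hne, h hs, hr⟩

theorem relR_empty : ∀ γ : List A, L.relR (∅ : Set V) γ = ∅
  | [] => rfl
  | _ :: _ => eq_empty_of_forall_notMem fun _ ⟨_, _, _, _, hs, _⟩ => hs

theorem relR_append (S : Set V) (γ δ : List A) :
    L.relR S (γ ++ δ) = L.relR (L.relR S γ) δ := by
  rcases γ with _ | ⟨a, γ⟩
  · rfl
  rcases δ with _ | ⟨b, δ⟩
  · rw [List.append_nil]; rfl
  ext v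
  constructor
  · rintro ⟨p, hp, hl, hne, hs, hr⟩
    have hl' : p.map L.lbl = (a :: γ) ++ (b :: δ) := hl
    obtain ⟨p₁, p₂, rfl, hl₁, hl₂⟩ := List.map_eq_append_iff.1 hl'
    have hne₁ : p₁ ≠ [] := by rintro rfl; simp at hl₁
    have hne₂ : p₂ ≠ [] := by rintro rfl; simp at hl₂
    change List.IsChain _ _ at hp
    rw [List.isChain_append] at hp
    obtain ⟨hc₁, hc₂, hcj⟩ := hp
    refine ⟨p₂, hc₂, hl₂, hne₂, ⟨p₁, hc₁, hl₁, hne₁, ?_, ?_⟩, ?_⟩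
    · rwa [List.head_append_of_ne_nil hne₁] at hs
    · exact hcj _ (List.getLast?_eq_some_getLast hne₁) _ (List.head?_eq_some_head hne₂)
    · rwa [List.getLast_append_of_ne_nil _ hne₂] at hr
  · rintro ⟨q, hq, hlq, hneq, ⟨p, hp, hlp, hnep, hsp, hrp⟩, hrq⟩
    refine ⟨p ++ q, ?_, by rw [List.map_append, hlp, hlq]; rfl, by simp [hnep], ?_, ?_⟩
    · change List.IsChain _ _
      rw [List.isChain_append]
      refine ⟨hp, hq, fun x hx y hy => ?_⟩
      rw [List.getLast?_eq_some_getLast hnep, Option.mem_some_iff] at hx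
      rw [List.head?_eq_some_head hneq, Option.mem_some_iff] at hy
      rw [← hx, ← hy, hrp]
    · rwa [List.head_append_of_ne_nil hnep]
    · rwa [List.getLast_append_of_ne_nil _ hneq]

theorem wr_append (β δ : List A) : L.wr (β ++ δ) = L.relR (L.wr β) δ :=
  L.relR_append Set.univ β δ

theorem wr_append_subset (β δ : List A) : L.wr (β ++ δ) ⊆ L.wr δ := by
  rw [wr_append]; exact L.relR_mono (subset_univ _) δ

theorem Bw_append_subset (β δ : List A) : L.Bw (β ++ δ) ⊆ L.Bw δ :=
  fun _ hX => ⟨hX.1, hX.2.trans (L.wr_append_subset β δ)⟩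

theorem relR_mem_of_nonempty {X : Set V} (hX : X ∈ L.ℬ) {γ : List A}
    (h : (L.relR X γ).Nonempty) : L.relR X γ ∈ L.ℬ := by
  rcases γ with _ | ⟨a, γ⟩
  · exact hX
  · obtain ⟨_, p, hp, hl, _⟩ := h
    exact L.relR_mem hX _ ⟨p, hp, hl⟩

variable {L}

theorem WeaklyLeftResolving.relR_inter (h : L.WeaklyLeftResolving) {X Y : Set V}
    (hX : X ∈ L.ℬ) (hY : Y ∈ L.ℬ) : ∀ γ : List A, L.relR (X ∩ Y) γ = L.relR X γ ∩ L.relR Y γ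
  | [] => rfl
  | _ :: _ => h hX hY _ (List.cons_ne_nil _ _)

end LabelledSpace

section Words

variable {A : Type*}

theorem wtake_zero (w : LWord A) : wtake w 0 = [] := by
  cases w <;> simp [wtake]

theorem length_wtake_le (w : LWord A) (n : ℕ) : (wtake w n).length ≤ n := by
  cases w <;> simp [wtake]

theorem length_wtake_of_le {w : LWord A} {n : ℕ} (h : (n : ℕ∞) ≤ wlen w) :
    (wtake w n).length = n := by
  cases w with
  | inl l => simpa [wtake, wlen] using h
  | inr f => simp [wtake]

theorem take_wtake (w : LWord A) (m n : ℕ) : (wtake w n).take m = wtake w (min m n) := by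
  cases w <;> simp [wtake, List.take_take, ← List.map_take, List.take_range]

theorem wtake_append_drop {w : LWord A} {m n : ℕ} (h : m ≤ n) :
    wtake w m ++ (wtake w n).drop m = wtake w n := by
  have := List.take_append_drop m (wtake w n)
  rwa [take_wtake, min_eq_left h] at this

theorem drop_wtake_self (w : LWord A) (n : ℕ) : (wtake w n).drop n = [] :=
  List.drop_eq_nil_of_le (length_wtake_le w n)

theorem drop_wtake_append_drop_wtake {w : LWord A} {m j k : ℕ} (hmj : m ≤ j) (hjk : j ≤ k)
    (hj : (j : ℕ∞) ≤ wlen w) :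
    (wtake w j).drop m ++ (wtake w k).drop j = (wtake w k).drop m := by
  conv_rhs => rw [← wtake_append_drop (w := w) hjk]
  rw [List.drop_append_of_le_length (by rw [length_wtake_of_le hj]; exact hmj)]

theorem eq_wtake_length_of_append_eq {w : LWord A} {n : ℕ} {ν γ : List A}
    (h : wtake w n = ν ++ γ) : ν = wtake w ν.length := by
  have hνn : ν.length ≤ n := by
    have := length_wtake_le w n
    rw [h, List.length_append] at this
    omega
  rw [← min_eq_left hνn, ← take_wtake, h, List.take_left]

theorem wlen_wappend (α : List A) (w : LWord A) :
    wlen (wappend α w) = (α.length : ℕ∞) + wlen w := by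
  cases w <;> simp [wappend, wlen]

theorem natCast_add_le_wlen_wappend_iff {α : List A} {w : LWord A} {n : ℕ} :
    ((α.length + n : ℕ) : ℕ∞) ≤ wlen (wappend α w) ↔ (n : ℕ∞) ≤ wlen w := by
  rw [wlen_wappend, Nat.cast_add, ENat.add_le_add_iff_left (ENat.natCast_ne_top _)]

theorem natCast_add_lt_wlen_wappend_iff {α : List A} {w : LWord A} {n : ℕ} :
    ((α.length + n : ℕ) : ℕ∞) < wlen (wappend α w) ↔ (n : ℕ∞) < wlen w := by
  rw [← ENat.natCast_add_one_le_iff, ← ENat.natCast_add_one_le_iff, ← Nat.cast_succ,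
    ← Nat.cast_succ, ← natCast_add_le_wlen_wappend_iff (α := α) (n := n + 1), Nat.add_succ]

theorem wtake_wappend (α : List A) (w : LWord A) (n : ℕ) :
    wtake (wappend α w) (α.length + n) = α ++ wtake w n := by
  cases w with
  | inl l => simp [wappend, wtake, List.take_append]
  | inr f =>
    simp only [wappend, wtake, List.range_add, List.map_append, List.map_map]
    congr 1
    · refine List.ext_getElem (by simp) fun i h _ => ?_
      simp_all
    · refine List.map_congr_left fun i _ => ?_
      simp

theorem drop_wtake_wappend (α : List A) (w : LWord A) (n : ℕ) :
    (wtake (wappend α w) (α.length + n + 1)).drop (α.length + n) = (wtake w (n + 1)).drop n := by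
  rw [Nat.add_assoc, wtake_wappend, List.drop_append, List.drop_eq_nil_of_le (by omega),
    List.nil_append, Nat.add_sub_cancel_left]

end Words

namespace LabelledSpace

variable {V Edg A : Type*} {L : LabelledSpace V Edg A}

theorem isLbl_wtake {w : LWord A} (hw : L.IsLWord w) (n : ℕ) : L.IsLbl (wtake w n) := by
  cases w with
  | inl l =>
    obtain ⟨p, hp, hl⟩ := hw
    exact ⟨p.take n, List.IsChain.take hp n, by rw [List.map_take, hl]; rfl⟩
  | inr f =>
    obtain ⟨p, hp, hl⟩ := hw
    refine ⟨(List.range n).map p, ?_, by simp [wtake, hl]⟩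
    change List.IsChain _ _
    rw [List.isChain_map]
    cases n with
    | zero => simp
    | succ k => exact (List.isChain_range_succ _ k).2 fun m _ => hp m

theorem relR_mem_Bw_wtake {w : LWord A} (hw : L.IsLWord w) {m n : ℕ} (hmn : m ≤ n)
    {X : Set V} (hX : X ∈ L.Bw (wtake w m)) :
    L.relR X ((wtake w n).drop m) ∈ L.Bw (wtake w n) := by
  obtain ⟨p, hp, hl⟩ := isLbl_wtake hw n
  refine ⟨L.relR_mem hX.1 _ ⟨p.drop m, List.IsChain.drop hp m, by rw [List.map_drop, hl]⟩, ?_⟩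
  calc L.relR X ((wtake w n).drop m)
      ⊆ L.relR (L.wr (wtake w m)) ((wtake w n).drop m) := L.relR_mono hX.2 _
    _ = L.wr (wtake w n) := by rw [← wr_append, wtake_append_drop hmn]

theorem ESle_trans {p q r : Option (List A × Set V)} (hpq : L.ESle p q) (hqr : L.ESle q r) :
    L.ESle p r := by
  match p, q, r, hpq, hqr with
  | none, _, _, _, _ => trivial
  | some p, some q, some r, ⟨γ₁, h₁, h₁'⟩, ⟨γ₂, h₂, h₂'⟩ =>
    refine ⟨γ₂ ++ γ₁, by rw [h₁, h₂, List.append_assoc], ?_⟩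
    rw [relR_append]
    exact h₁'.trans (L.relR_mono h₂' γ₁)

section CompleteFamily

variable {u : LWord A} {F G : ℕ → Set (Set V)}

theorem IsCompleteFamily.isFilterIn_of_nonempty (hF : L.IsCompleteFamily u F) {n : ℕ}
    (hn : (n : ℕ∞) ≤ wlen u) (hne : (F n).Nonempty) : IsFilterIn (L.Bw (wtake u n)) (F n) := by
  rcases Nat.eq_zero_or_pos n with rfl | hpos
  · rw [wtake_zero]
    exact hF.2.1.resolve_right hne.ne_empty
  · exact hF.1 n hpos hn

theorem IsCompleteFamily.relR_mem (hF : L.IsCompleteFamily u F) {m n : ℕ} (hmn : m ≤ n)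
    (hn : (n : ℕ∞) ≤ wlen u) {X : Set V} (hX : X ∈ F m) :
    L.relR X ((wtake u n).drop m) ∈ F n := by
  induction n, hmn using Nat.le_induction with
  | base => rwa [drop_wtake_self]
  | succ n hmn ih =>
    have hlt : (n : ℕ∞) < wlen u := (Nat.cast_lt.2 n.lt_succ_self).trans_le hn
    have h := (hF.2.2 n hlt ▸ ih hlt.le).2
    rwa [← relR_append, drop_wtake_append_drop_wtake hmn n.le_succ hlt.le] at h

theorem IsCompleteFamily.mem_of_relR_mem (hu : L.IsLWord u) (hF : L.IsCompleteFamily u F)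
    {m n : ℕ} (hmn : m ≤ n) (hn : (n : ℕ∞) ≤ wlen u) {X : Set V} (hX : X ∈ L.Bw (wtake u m))
    (h : L.relR X ((wtake u n).drop m) ∈ F n) : X ∈ F m := by
  induction n, hmn using Nat.le_induction with
  | base => rwa [drop_wtake_self] at h
  | succ n hmn ih =>
    have hlt : (n : ℕ∞) < wlen u := (Nat.cast_lt.2 n.lt_succ_self).trans_le hn
    refine ih hlt.le ?_
    rw [hF.2.2 n hlt]
    refine ⟨relR_mem_Bw_wtake hu hmn hX, ?_⟩
    rwa [← relR_append, drop_wtake_append_drop_wtake hmn n.le_succ hlt.le]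

theorem mem_filterOf_iff (hu : L.IsLWord u) (hF : L.IsCompleteFamily u F) {ν : List A}
    {X : Set V} :
    some (ν, X) ∈ L.filterOf u F ↔
      (ν.length : ℕ∞) ≤ wlen u ∧ ν = wtake u ν.length ∧ X ∈ F ν.length := by
  constructor
  · rintro ⟨hmem, n, hn, X₀, hX₀, γ, hγ, hX₀γ⟩
    dsimp only at hγ hX₀γ
    have hν := eq_wtake_length_of_append_eq hγ
    have hνn : ν.length ≤ n := by
      have := length_wtake_le u n
      rw [hγ, List.length_append] at this
      omega
    have hγ' : γ = (wtake u n).drop ν.length := by rw [hγ, List.drop_left]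
    have hXBw : X ∈ L.Bw (wtake u ν.length) := hν ▸ hmem.1
    refine ⟨(Nat.cast_le.2 hνn).trans hn, hν, hF.mem_of_relR_mem hu hνn hn hXBw ?_⟩
    rw [← hγ']
    refine (hF.isFilterIn_of_nonempty hn ⟨X₀, hX₀⟩).2.2.2.1 X₀ hX₀ _ ?_ hX₀γ
    rw [hγ']
    exact relR_mem_Bw_wtake hu hνn hXBw
  · rintro ⟨hlen, hν, hX⟩
    have hfil := hF.isFilterIn_of_nonempty hlen ⟨X, hX⟩
    have hXBw := hfil.1 hX
    rw [← hν] at hXBw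
    exact ⟨⟨hXBw, fun h => hfil.2.2.1 (h ▸ hX)⟩, ν.length, hlen, X, hX, [],
      by rw [List.append_nil, ← hν], subset_rfl⟩

theorem mem_filterOf_wtake_iff (hu : L.IsLWord u) (hF : L.IsCompleteFamily u F) {n : ℕ}
    (hn : (n : ℕ∞) ≤ wlen u) {X : Set V} :
    some (wtake u n, X) ∈ L.filterOf u F ↔ X ∈ F n := by
  rw [mem_filterOf_iff hu hF, length_wtake_of_le hn]
  simp [hn]

theorem none_notMem_filterOf : none ∉ L.filterOf u F :=
  fun ⟨_, _, _, _, _, h⟩ => h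

theorem exists_of_mem_filterOf (hu : L.IsLWord u) (hF : L.IsCompleteFamily u F)
    {p : Option (List A × Set V)} (hp : p ∈ L.filterOf u F) :
    ∃ n : ℕ, (n : ℕ∞) ≤ wlen u ∧ ∃ X ∈ F n, p = some (wtake u n, X) := by
  rcases p with _ | ⟨ν, X⟩
  · exact absurd hp none_notMem_filterOf
  obtain ⟨hlen, hν, hX⟩ := (mem_filterOf_iff hu hF).1 hp
  exact ⟨ν.length, hlen, X, hX, by rw [← hν]⟩

theorem xiN_filterOf (hu : L.IsLWord u) (hF : L.IsCompleteFamily u F) {n : ℕ}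
    (hn : (n : ℕ∞) ≤ wlen u) : L.xiN u (L.filterOf u F) n = F n :=
  Set.ext fun _ => mem_filterOf_wtake_iff hu hF hn

theorem filterOf_congr (h : ∀ n : ℕ, (n : ℕ∞) ≤ wlen u → F n = G n) :
    L.filterOf u F = L.filterOf u G :=
  Set.ext fun _ => and_congr_right fun _ => exists_congr fun n =>
    and_congr_right fun hn => by rw [h n hn]

theorem IsCompleteFamily.congr (hF : L.IsCompleteFamily u F)
    (h : ∀ n : ℕ, (n : ℕ∞) ≤ wlen u → F n = G n) : L.IsCompleteFamily u G := by
  refine ⟨fun n hn0 hn => h n hn ▸ hF.1 n hn0 hn, h 0 zero_le ▸ hF.2.1, fun n hn => ?_⟩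
  have hn1 : ((n + 1 : ℕ) : ℕ∞) ≤ wlen u := by exact_mod_cast Order.add_one_le_of_lt hn
  rw [← h n hn.le, ← h (n + 1) hn1]
  exact hF.2.2 n hn

theorem IsCompleteFamily.exists_lower_bound (hF : L.IsCompleteFamily u F) {m n : ℕ}
    (hmn : m ≤ n) (hn : (n : ℕ∞) ≤ wlen u) {X Y : Set V} (hX : X ∈ F m) (hY : Y ∈ F n) :
    ∃ W ∈ F n, L.ESle (some (wtake u n, W)) (some (wtake u m, X)) ∧
      L.ESle (some (wtake u n, W)) (some (wtake u n, Y)) := by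
  have hXn := hF.relR_mem hmn hn hX
  obtain ⟨W, hW, hWX, hWY⟩ := (hF.isFilterIn_of_nonempty hn ⟨Y, hY⟩).2.2.2.2 _ hXn Y hY
  exact ⟨W, hW, ⟨_, (wtake_append_drop hmn).symm, hWX⟩, ⟨[], (List.append_nil _).symm, hWY⟩⟩

theorem IsCompleteFamily.isESFilter_filterOf (hu : L.IsLWord u) (hF : L.IsCompleteFamily u F)
    {n : ℕ} (hn : (n : ℕ∞) ≤ wlen u) (hne : (F n).Nonempty) :
    L.IsESFilter (L.filterOf u F) := by
  refine ⟨?_, ?_, ?_, ?_⟩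
  · rintro (_ | p) hp
    · exact absurd hp none_notMem_filterOf
    · exact ⟨hp.1, Option.some_ne_none _⟩
  · obtain ⟨X, hX⟩ := hne
    exact ⟨_, (mem_filterOf_wtake_iff hu hF hn).2 hX⟩
  · rintro p ⟨-, n, hn, X, hX, hle⟩ q hq hpq
    exact ⟨hq, n, hn, X, hX, ESle_trans hle hpq⟩
  · intro p hp q hq
    obtain ⟨m, hm, X, hX, rfl⟩ := exists_of_mem_filterOf hu hF hp
    obtain ⟨n, hn, Y, hY, rfl⟩ := exists_of_mem_filterOf hu hF hq
    rcases le_total m n with hmn | hnm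
    · obtain ⟨W, hW, hWX, hWY⟩ := hF.exists_lower_bound hmn hn hX hY
      exact ⟨_, (mem_filterOf_wtake_iff hu hF hn).2 hW, hWX, hWY⟩
    · obtain ⟨W, hW, hWY, hWX⟩ := hF.exists_lower_bound hnm hm hY hX
      exact ⟨_, (mem_filterOf_wtake_iff hu hF hm).2 hW, hWX, hWY⟩

theorem IsCompleteFamily.inter_wr_mem (hwlr : L.WeaklyLeftResolving) (hu : L.IsLWord u)
    (hF : L.IsCompleteFamily u F) {k : ℕ} (hk0 : 0 < k) (hk : (k : ℕ∞) < wlen u) {X C : Set V}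
    (hX : X ∈ L.ℬ) (hC : C ∈ F (k + 1)) (hCX : C ⊆ L.relR X ((wtake u (k + 1)).drop k)) :
    X ∩ L.wr (wtake u k) ∈ F k := by
  have hk1 : ((k + 1 : ℕ) : ℕ∞) ≤ wlen u := by exact_mod_cast Order.add_one_le_of_lt hk
  have hR : L.wr (wtake u k) ∈ L.ℬ :=
    L.range_mem _ (List.ne_nil_of_length_pos (by rwa [length_wtake_of_le hk.le]))
      (isLbl_wtake hu k)
  have hXR : X ∩ L.wr (wtake u k) ∈ L.Bw (wtake u k) := ⟨L.inter_mem hX hR, inter_subset_right⟩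
  have hfil := hF.1 (k + 1) k.succ_pos hk1
  rw [hF.2.2 k hk]
  refine ⟨hXR, hfil.2.2.2.1 C hC _ (relR_mem_Bw_wtake hu k.le_succ hXR) ?_⟩
  rw [hwlr.relR_inter hX hR, ← wr_append, wtake_append_drop k.le_succ]
  exact subset_inter hCX (hfil.1 hC).2

end CompleteFamily

theorem isFilterIn_hmap {P G : Set (Set V)} {β : List A} (hG : IsFilterIn P G)
    (hsub : G ⊆ L.Bw β) : IsFilterIn (L.Bw β) (L.hmap β G) := by
  obtain ⟨-, ⟨C₀, hC₀⟩, hemp, -, hdir⟩ := hG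
  refine ⟨fun D hD => hD.1, ⟨C₀, hsub hC₀, C₀, hC₀, subset_rfl⟩, ?_, ?_, ?_⟩
  · rintro ⟨-, C, hC, hCsub⟩
    exact hemp (subset_empty_iff.1 hCsub ▸ hC)
  · rintro X ⟨-, C, hC, hCX⟩ Y hY hXY
    exact ⟨hY, C, hC, hCX.trans hXY⟩
  · rintro X ⟨hX, C₁, hC₁, h₁⟩ Y ⟨hY, C₂, hC₂, h₂⟩
    obtain ⟨C, hC, hCC₁, hCC₂⟩ := hdir C₁ hC₁ C₂ hC₂
    exact ⟨X ∩ Y, ⟨⟨L.inter_mem hX.1 hY.1, inter_subset_left.trans hX.2⟩,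
      C, hC, subset_inter (hCC₁.trans h₁) (hCC₂.trans h₂)⟩, inter_subset_left, inter_subset_right⟩

theorem ESmul_some_ne_none_iff {ν ρ : List A} {X Y : Set V} :
    L.ESmul (some (ν, X)) (some (ρ, Y)) ≠ none ↔
      (∃ γ, ρ = ν ++ γ ∧ (L.relR X γ ∩ Y).Nonempty) ∨
        ∃ γ, ν = ρ ++ γ ∧ (X ∩ L.relR Y γ).Nonempty := by
  simp only [ESmul]
  split_ifs with h₁ h₂ h₃ h₄
  · obtain ⟨γ, rfl⟩ := h₁
    rw [List.drop_left] at h₂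
    simp only [ne_eq, not_true_eq_false, false_iff, not_or, not_exists, not_and,
      not_nonempty_iff_eq_empty]
    refine ⟨fun γ' hγ' => List.append_cancel_left hγ' ▸ h₂, fun γ' hγ' => ?_⟩
    obtain ⟨rfl, rfl⟩ : γ = [] ∧ γ' = [] := by simpa using hγ'
    exact h₂
  · obtain ⟨γ, rfl⟩ := h₁
    rw [List.drop_left] at h₂
    exact iff_of_true (by simp) (Or.inl ⟨γ, rfl, nonempty_iff_ne_empty.2 h₂⟩)
  · obtain ⟨γ, rfl⟩ := h₃
    rw [List.drop_left] at h₄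
    simp only [ne_eq, not_true_eq_false, false_iff, not_or, not_exists, not_and,
      not_nonempty_iff_eq_empty]
    refine ⟨fun γ' hγ' => absurd ⟨γ', hγ'.symm⟩ h₁, fun γ' hγ' => ?_⟩
    rw [← List.append_cancel_left hγ', h₄]
  · obtain ⟨γ, rfl⟩ := h₃
    rw [List.drop_left] at h₄
    exact iff_of_true (by simp) (Or.inr ⟨γ, rfl, nonempty_iff_ne_empty.2 h₄⟩)
  · simp only [ne_eq, not_true_eq_false, false_iff, not_or, not_exists, not_and]
    exact ⟨fun γ hγ => absurd ⟨γ, hγ.symm⟩ h₁, fun γ hγ => absurd ⟨γ, hγ.symm⟩ h₃⟩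

section LiftCover

variable (L) (α μ : List A) (C : Set V)

/-- For `z = (ν, Y, ν)` below `(μ, X, μ)`, this is the product `(αμ, C, αμ) · (αν, Y, αν)`. -/
noncomputable def liftCover : Option (List A × Set V) → Option (List A × Set V)
  | none => none
  | some (ν, Y) =>
    haveI := Classical.propDecidable
    if L.relR C (ν.drop μ.length) ∩ Y = ∅ then none
    else some (α ++ ν, L.relR C (ν.drop μ.length) ∩ Y)

open Classical in
theorem liftCover_some_append (δ : List A) (Y : Set V) :
    L.liftCover α μ C (some (μ ++ δ, Y)) =
      if L.relR C δ ∩ Y = ∅ then none else some (α ++ (μ ++ δ), L.relR C δ ∩ Y) := by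
  simp [liftCover]

variable {L α μ C}

theorem liftCover_ESle (hC : C ∈ L.Bw (α ++ μ)) {X : Set V} {z : Option (List A × Set V)}
    (hz : L.ESmem z) (hle : L.ESle z (some (μ, X))) :
    L.ESmem (L.liftCover α μ C z) ∧ L.ESle (L.liftCover α μ C z) (some (α ++ μ, C)) := by
  rcases z with _ | ⟨ν, Y⟩
  · exact ⟨trivial, trivial⟩
  obtain ⟨δ, rfl : ν = μ ++ δ, -⟩ := hle
  rw [liftCover_some_append]
  split_ifs with h
  · exact ⟨trivial, trivial⟩
  have hCδ := L.relR_mem_of_nonempty hC.1 ((nonempty_iff_ne_empty.2 h).mono inter_subset_left)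
  refine ⟨⟨⟨L.inter_mem hCδ hz.1.1, ?_⟩, h⟩, δ, (List.append_assoc _ _ _).symm, inter_subset_left⟩
  calc L.relR C δ ∩ Y ⊆ L.relR (L.wr (α ++ μ)) δ := inter_subset_left.trans (L.relR_mono hC.2 δ)
    _ = L.wr (α ++ (μ ++ δ)) := by rw [← wr_append, List.append_assoc]

theorem liftCover_mul_ne_none (hwlr : L.WeaklyLeftResolving) (hC : C ∈ L.ℬ) {ε δ : List A}
    {W Y : Set V} (hWC : W ⊆ L.relR C ε) (hY : Y ∈ L.ℬ)
    (h : L.ESmul (some (μ ++ ε, W)) (some (μ ++ δ, Y)) ≠ none) :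
    L.ESmul (some (α ++ (μ ++ ε), W)) (L.liftCover α μ C (some (μ ++ δ, Y))) ≠ none := by
  rw [liftCover_some_append]
  rcases ESmul_some_ne_none_iff.1 h with ⟨γ, hδ, hne⟩ | ⟨γ, hε, hne⟩
  · obtain rfl : δ = ε ++ γ := by simpa using hδ
    have hsub : L.relR W γ ⊆ L.relR C (ε ++ γ) := by
      rw [relR_append]; exact L.relR_mono hWC γ
    have hsub' : L.relR W γ ∩ Y ⊆ L.relR W γ ∩ (L.relR C (ε ++ γ) ∩ Y) :=
      fun v ⟨hvW, hvY⟩ => ⟨hvW, hsub hvW, hvY⟩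
    rw [if_neg (hne.mono (hsub'.trans inter_subset_right)).ne_empty]
    exact ESmul_some_ne_none_iff.2 (Or.inl ⟨γ, by simp, hne.mono hsub'⟩)
  · obtain rfl : ε = δ ++ γ := by simpa using hε
    rw [relR_append] at hWC
    have hCδ : L.relR C δ ∈ L.ℬ := by
      refine L.relR_mem_of_nonempty hC (nonempty_iff_ne_empty.2 fun h₀ => ?_)
      obtain ⟨v, hv, -⟩ := hne
      simpa [h₀, relR_empty] using hWC hv
    have hsub : W ∩ L.relR Y γ ⊆ W ∩ L.relR (L.relR C δ ∩ Y) γ := by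
      rw [hwlr.relR_inter hCδ hY]
      exact fun v ⟨hvW, hvY⟩ => ⟨hvW, hWC hvW, hvY⟩
    have hD : L.relR C δ ∩ Y ≠ ∅ := fun h₀ => by
      simpa [h₀, relR_empty] using hne.mono hsub
    rw [if_neg hD]
    exact ESmul_some_ne_none_iff.2 (Or.inr ⟨γ, by simp, hne.mono hsub⟩)

theorem ESCover.liftCover (hwlr : L.WeaklyLeftResolving) {X : Set V} (hC : C ∈ L.Bw (α ++ μ))
    (hCX : C ⊆ X) {Z : Set (Option (List A × Set V))} (hZ : L.ESCover (some (μ, X)) Z) :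
    L.ESCover (some (α ++ μ, C)) (L.liftCover α μ C '' Z) := by
  refine ⟨?_, ?_⟩
  · rintro _ ⟨z, hz, rfl⟩
    exact liftCover_ESle hC (hZ.1 z hz).1 (hZ.1 z hz).2
  rintro (_ | ⟨_, W⟩) hy hy0 ⟨ε, hρ, hWC⟩
  · exact absurd rfl hy0
  obtain rfl : _ = α ++ μ ++ ε := hρ
  have hy' : L.ESmem (some (μ ++ ε, W)) := by
    refine ⟨⟨hy.1.1, hy.1.2.trans ?_⟩, hy.2⟩
    rw [List.append_assoc]
    exact L.wr_append_subset α _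
  obtain ⟨z, hzZ, hz⟩ :=
    hZ.2 _ hy' (Option.some_ne_none _) ⟨ε, rfl, hWC.trans (L.relR_mono hCX ε)⟩
  obtain ⟨hzmem, hzle⟩ := hZ.1 z hzZ
  rcases z with _ | ⟨ν, Y⟩
  · exact absurd rfl hz
  obtain ⟨δ, rfl : ν = μ ++ δ, -⟩ := hzle
  refine ⟨_, mem_image_of_mem _ hzZ, ?_⟩
  rw [List.append_assoc]
  exact liftCover_mul_ne_none hwlr hC.1 hWC hzmem.1.1 hz

end LiftCover

section Cut

variable {α : List A} {w : LWord A} {F : ℕ → Set (Set V)}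

theorem IsCompleteFamily.isFilterIn_wappend (hα : α ≠ [])
    (hF : L.IsCompleteFamily (wappend α w) F) {n : ℕ} (hn : (n : ℕ∞) ≤ wlen w) :
    IsFilterIn (L.Bw (α ++ wtake w n)) (F (α.length + n)) := by
  have := List.length_pos_iff.2 hα
  rw [← wtake_wappend]
  exact hF.1 _ (by omega) (natCast_add_le_wlen_wappend_iff.2 hn)

theorem IsCompleteFamily.isFilterIn_hfam (hα : α ≠ []) (hF : L.IsCompleteFamily (wappend α w) F)
    {n : ℕ} (hn : (n : ℕ∞) ≤ wlen w) : IsFilterIn (L.Bw (wtake w n)) (L.Hfam α w F n) :=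
  have hfil := hF.isFilterIn_wappend hα hn
  isFilterIn_hmap hfil fun _ hC => L.Bw_append_subset α _ (hfil.1 hC)

theorem IsCompleteFamily.hfam (hwlr : L.WeaklyLeftResolving) (hα : α ≠ [])
    (hw : L.IsLWord w) (hu : L.IsLWord (wappend α w)) (hF : L.IsCompleteFamily (wappend α w) F) :
    L.IsCompleteFamily w (L.Hfam α w F) := by
  refine ⟨fun n _ hn => hF.isFilterIn_hfam hα hn,
    Or.inl (wtake_zero w ▸ hF.isFilterIn_hfam hα zero_le), fun n hn => ?_⟩
  have hlt := natCast_add_lt_wlen_wappend_iff (α := α).2 hn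
  have hrec := hF.2.2 _ hlt
  rw [drop_wtake_wappend] at hrec
  ext X
  constructor
  · rintro ⟨hX, C, hC, hCX⟩
    rw [hrec] at hC
    exact ⟨hX, relR_mem_Bw_wtake hw n.le_succ hX, _, hC.2, L.relR_mono hCX _⟩
  · rintro ⟨hX, -, C, hC, hCX⟩
    have := List.length_pos_iff.2 hα
    refine ⟨hX, _, hF.inter_wr_mem hwlr hu (by omega) hlt hX.1 hC ?_, inter_subset_left⟩
    rwa [drop_wtake_wappend]

theorem mem_filterOf_hfam_of_mem (hw : L.IsLWord w) (hu : L.IsLWord (wappend α w))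
    (hF : L.IsCompleteFamily (wappend α w) F) (hH : L.IsCompleteFamily w (L.Hfam α w F))
    {ν : List A} {D Y : Set V} (hD : some (α ++ ν, D) ∈ L.filterOf (wappend α w) F)
    (hY : Y ∈ L.Bw ν) (hDY : D ⊆ Y) : some (ν, Y) ∈ L.filterOf w (L.Hfam α w F) := by
  obtain ⟨hlen, hν, hDF⟩ := (mem_filterOf_iff hu hF).1 hD
  rw [List.length_append] at hlen hν hDF
  rw [wtake_wappend] at hν
  have hν' : ν = wtake w ν.length := List.append_cancel_left hν
  refine (mem_filterOf_iff hw hH).2 ⟨natCast_add_le_wlen_wappend_iff.1 hlen, hν', ?_, D, hDF, hDY⟩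
  rwa [← hν']

theorem isTightESFilter_filterOf_hfam (hwlr : L.WeaklyLeftResolving) (hα : α ≠ [])
    (hw : L.IsLWord w) (hu : L.IsLWord (wappend α w)) (hF : L.IsCompleteFamily (wappend α w) F)
    (hT : L.IsTightESFilter (L.filterOf (wappend α w) F)) :
    L.IsTightESFilter (L.filterOf w (L.Hfam α w F)) := by
  have hH := hF.hfam hwlr hα hw hu
  refine ⟨hH.isESFilter_filterOf hw zero_le (hF.isFilterIn_hfam hα zero_le).2.1, ?_⟩
  intro x hx Z hZ hcov
  obtain ⟨m, hm, X, ⟨-, C, hC, hCX⟩, rfl⟩ := exists_of_mem_filterOf hw hH hx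
  have hCξ : some (α ++ wtake w m, C) ∈ L.filterOf (wappend α w) F := by
    rw [← wtake_wappend]
    exact (mem_filterOf_wtake_iff hu hF (natCast_add_le_wlen_wappend_iff.2 hm)).2 hC
  obtain ⟨_, ⟨z, hzZ, rfl⟩, hzξ⟩ := hT.2 _ hCξ _ (hZ.image _)
    (hcov.liftCover hwlr ((hF.isFilterIn_wappend hα hm).1 hC) hCX)
  obtain ⟨hzmem, hzle⟩ := hcov.1 z hzZ
  rcases z with _ | ⟨ν, Y⟩
  · exact absurd hzξ none_notMem_filterOf
  obtain ⟨δ, rfl : ν = wtake w m ++ δ, -⟩ := hzle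
  rw [liftCover_some_append] at hzξ
  split_ifs at hzξ
  · exact absurd hzξ none_notMem_filterOf
  exact ⟨_, hzZ, mem_filterOf_hfam_of_mem hw hu hF hH hzξ hzmem.1 inter_subset_right⟩

end Cut

end LabelledSpace

section
variable {V Edg A : Type*} (L : LabelledSpace V Edg A)

theorem cut_filter_tight (hwlr : L.WeaklyLeftResolving)
    (α : List A) (hα : α ≠ [])
    (w : LWord A) (hw : L.IsLWord w) (hαw : L.IsLWord (wappend α w))
    (ξ : Set (Option (List A × Set V))) (hξ : ξ ∈ L.Tw (wappend α w)) :
    L.IsCompleteFamily w (L.Hfam α w (L.xiN (wappend α w) ξ)) ∧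
    L.IsTightESFilter (L.filterOf w (L.Hfam α w (L.xiN (wappend α w) ξ))) := by
  obtain ⟨hT, F, hF, rfl⟩ := hξ
  have hagree : ∀ n : ℕ, (n : ℕ∞) ≤ wlen w →
      L.Hfam α w F n = L.Hfam α w (L.xiN (wappend α w) (L.filterOf (wappend α w) F)) n :=
    fun n hn => by
      simp only [LabelledSpace.Hfam,
        LabelledSpace.xiN_filterOf hαw hF (natCast_add_le_wlen_wappend_iff.2 hn)]
  rw [← LabelledSpace.filterOf_congr hagree]
  exact ⟨(hF.hfam hwlr hα hw hαw).congr hagree,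
    LabelledSpace.isTightESFilter_filterOf_hfam hwlr hα hw hαw hF hT⟩

end
end
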